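/- If there exists t₁ and a nonnegative C¹ function g : [t₁,∞) → [0,∞) satisfying the differential inequality -g'(x) ≥ g(x)² + f(x) for all x ≥ t₁, then f is recursively integrable. -/

import Mathlib

/-- `f` is recursively integrable on `[t₀, ∞)`: for some `t₁ ≥ t₀`, the differential
equation `-g′(x) = g(x)² + f(x)` has a nonnegative solution `g` on `[t₁, ∞)`. -/
def RecInt (t₀ : ℝ) (f : ℝ → ℝ) : Prop :=
  ∃ t₁ : ℝ, t₀ ≤ t₁ ∧ ∃ g : ℝ → ℝ, (∀ x, t₁ ≤ x → 0 ≤ g x) ∧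
    ∀ x, t₁ ≤ x → HasDerivWithinAt g (-(g x ^ 2 + f x)) (Set.Ici t₁) x

/-!
Replace `y²` in the Riccati field by `π(y)²`, where `π` is the projection onto `[0, g t₁]`. The
truncated field is globally Lipschitz and bounded on compact time intervals, so Picard–Lindelöf
on `[t₁, T]`, glued over all `T`, gives a solution `h` on `[t₁, ∞)` with `h t₁ = g t₁`. As
`f ≥ 0`, `h` is nonincreasing, so `h ≤ g t₁`; and wherever `g ≥ h ≥ 0` the differential
inequality gives `(g - h)' ≤ π(h)² - g² ≤ 0`, so `g ≤ h`. Thus `0 ≤ g ≤ h ≤ g t₁`, the truncation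
is inactive along `h`, and `h` solves `-h' = h² + f`.
-/

open Set Filter Topology
open scoped NNReal

theorem nonpos_of_deriv_nonpos_of_nonneg {φ φ' : ℝ → ℝ} {a : ℝ}
    (hφ : ∀ x, a ≤ x → HasDerivWithinAt φ (φ' x) (Ici a) x) (ha : φ a ≤ 0)
    (hφ' : ∀ x, a ≤ x → 0 ≤ φ x → φ' x ≤ 0) {x : ℝ} (hx : a ≤ x) : φ x ≤ 0 := by
  -- `φ` can only reach the fence `ε (y - a)` where `φ ≥ 0`, i.e. where `φ' ≤ 0 < ε`
  have hε : ∀ ε > 0, φ x ≤ ε * (x - a) := fun ε hε =>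
    image_le_of_deriv_right_lt_deriv_boundary' (b := x) (B := fun y => ε * (y - a))
      (fun y hy => (hφ y hy.1).continuousWithinAt.mono Icc_subset_Ici_self)
      (fun y hy => (hφ y hy.1).mono (Ici_subset_Ici.2 hy.1))
      (by simpa using ha) (by fun_prop)
      (fun y _ => by simpa using (((hasDerivAt_id y).sub_const a).const_mul ε).hasDerivWithinAt)
      (fun y hy hyB => (hφ' y hy.1 (hyB ▸ mul_nonneg hε.le (sub_nonneg.2 hy.1))).trans_lt hε)
      ⟨hx, le_rfl⟩
  have hlim : Tendsto (fun ε : ℝ => ε * (x - a)) (𝓝[>] 0) (𝓝 0) :=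
    ((continuous_mul_const (x - a)).tendsto' 0 0 (zero_mul _)).mono_left nhdsWithin_le_nhds
  exact ge_of_tendsto hlim (eventually_nhdsWithin_of_forall hε)

theorem HasDerivWithinAt.Ici_of_Icc {E : Type*} [NormedAddCommGroup E] [NormedSpace ℝ E]
    {f : ℝ → E} {f' : E} {a b t : ℝ}
    (h : HasDerivWithinAt f f' (Icc a b) t) (ht : t < b) : HasDerivWithinAt f f' (Ici a) t :=
  h.mono_of_mem_nhdsWithin (inter_mem_nhdsWithin _ (Iic_mem_nhds ht))

section ODE

variable {E : Type*} [NormedAddCommGroup E] [NormedSpace ℝ E] [CompleteSpace E]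
  {v : ℝ → E → E} {K : ℝ≥0} {a : ℝ}

theorem exists_hasDerivWithinAt_Icc_of_lipschitzWith_of_bdd
    (hv : ∀ t, LipschitzWith K (v t)) (hcont : ∀ x, ContinuousOn (v · x) (Ici a))
    (hbdd : ∀ T, ∃ L : ℝ≥0, ∀ t ∈ Icc a T, ∀ x, ‖v t x‖ ≤ L) (x₀ : E) (T : ℝ) :
    ∃ α : ℝ → E, α a = x₀ ∧ ∀ t ∈ Icc a T, HasDerivWithinAt α (v t (α t)) (Icc a T) t := by
  obtain ⟨L, hL⟩ := hbdd (max a T)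
  have hpl : IsPicardLindelof v (⟨a, left_mem_Icc.2 (le_max_left a T)⟩ : Icc a (max a T)) x₀
      (L * (max a T - a).toNNReal) 0 L K :=
    { lipschitzOnWith := fun t _ => (hv t).lipschitzOnWith
      continuousOn := fun x _ => (hcont x).mono Icc_subset_Ici_self
      norm_le := fun t ht x _ => hL t ht x
      mul_max_le := by
        simp [Real.coe_toNNReal _ (sub_nonneg.2 (le_max_left a T))] }
  obtain ⟨α, hα₀, hα⟩ := hpl.exists_eq_forall_mem_Icc_hasDerivWithinAt₀
  exact ⟨α, hα₀, fun t ht => (hα t ⟨ht.1, ht.2.trans (le_max_right a T)⟩).mono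
    (Icc_subset_Icc_right (le_max_right a T))⟩

theorem exists_hasDerivWithinAt_Ici_of_lipschitzWith_of_bdd
    (hv : ∀ t, LipschitzWith K (v t)) (hcont : ∀ x, ContinuousOn (v · x) (Ici a))
    (hbdd : ∀ T, ∃ L : ℝ≥0, ∀ t ∈ Icc a T, ∀ x, ‖v t x‖ ≤ L) (x₀ : E) :
    ∃ α : ℝ → E, α a = x₀ ∧ ∀ t, a ≤ t → HasDerivWithinAt α (v t (α t)) (Ici a) t := by
  choose α hα₀ hα using
    exists_hasDerivWithinAt_Icc_of_lipschitzWith_of_bdd hv hcont hbdd x₀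
  have agree : ∀ T T', EqOn (α T) (α T') (Icc a (min T T')) := fun T T' =>
    ODE_solution_unique hv
      (fun t ht => (hα T t ⟨ht.1, ht.2.trans (min_le_left T T')⟩).continuousWithinAt.mono
        (Icc_subset_Icc_right (min_le_left T T')))
      (fun t ht => ((hα T t ⟨ht.1, ht.2.le.trans (min_le_left T T')⟩).Ici_of_Icc
        (ht.2.trans_le (min_le_left T T'))).mono (Ici_subset_Ici.2 ht.1))
      (fun t ht => (hα T' t ⟨ht.1, ht.2.trans (min_le_right T T')⟩).continuousWithinAt.mono
        (Icc_subset_Icc_right (min_le_right T T')))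
      (fun t ht => ((hα T' t ⟨ht.1, ht.2.le.trans (min_le_right T T')⟩).Ici_of_Icc
        (ht.2.trans_le (min_le_right T T'))).mono (Ici_subset_Ici.2 ht.1))
      ((hα₀ T).trans (hα₀ T').symm)
  refine ⟨fun t => α (t + 1) t, hα₀ (a + 1), fun t ht => ?_⟩
  have hloc : (fun s => α (s + 1) s) =ᶠ[𝓝[Ici a] t] α (t + 1) :=
    mem_of_superset (inter_mem_nhdsWithin _ (Iic_mem_nhds (lt_add_one t)))
      fun s hs => agree (s + 1) (t + 1) ⟨hs.1, le_min (by linarith) hs.2⟩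
  exact ((hα (t + 1) t ⟨ht, by linarith⟩).Ici_of_Icc (lt_add_one t)).congr_of_eventuallyEq hloc rfl

end ODE

noncomputable def truncRiccatiField (f : ℝ → ℝ) {B : ℝ} (hB : 0 ≤ B) (t y : ℝ) : ℝ :=
  -((projIcc 0 B hB y : ℝ) ^ 2 + f t)

section truncRiccatiField

variable {f : ℝ → ℝ} {a B : ℝ} (hB : 0 ≤ B)
include hB

theorem truncRiccatiField_of_mem {t y : ℝ} (hy : y ∈ Icc 0 B) :
    truncRiccatiField f hB t y = -(y ^ 2 + f t) := by
  rw [truncRiccatiField, projIcc_of_mem hB hy]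

theorem lipschitzWith_truncRiccatiField (t : ℝ) :
    LipschitzWith (2 * B).toNNReal (truncRiccatiField f hB t) := by
  refine LipschitzWith.of_dist_le_mul fun y z => ?_
  obtain ⟨hy₀, hyB⟩ := (projIcc 0 B hB y).2
  obtain ⟨hz₀, hzB⟩ := (projIcc 0 B hB z).2
  calc dist (truncRiccatiField f hB t y) (truncRiccatiField f hB t z)
      = |(projIcc 0 B hB y : ℝ) - projIcc 0 B hB z| *
          |(projIcc 0 B hB y : ℝ) + projIcc 0 B hB z| := by
        rw [Real.dist_eq, ← abs_mul, truncRiccatiField, truncRiccatiField, ← abs_neg]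
        ring_nf
    _ ≤ |y - z| * (2 * B) := by
        refine mul_le_mul (abs_projIcc_sub_projIcc hB) ?_ (abs_nonneg _) (abs_nonneg _)
        rw [abs_of_nonneg (by linarith)]
        linarith
    _ = (2 * B).toNNReal * dist y z := by
        rw [Real.coe_toNNReal _ (by positivity), Real.dist_eq, mul_comm]

theorem exists_bound_truncRiccatiField (hf : ContinuousOn f (Ici a)) (T : ℝ) :
    ∃ L : ℝ≥0, ∀ t ∈ Icc a T, ∀ y, ‖truncRiccatiField f hB t y‖ ≤ L := by
  obtain ⟨M, hM⟩ := isCompact_Icc.exists_bound_of_continuousOn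
    (hf.mono (Icc_subset_Ici_self : Icc a T ⊆ Ici a))
  refine ⟨(B ^ 2 + M).toNNReal, fun t ht y => ?_⟩
  obtain ⟨hy₀, hyB⟩ := (projIcc 0 B hB y).2
  calc ‖truncRiccatiField f hB t y‖ ≤ (projIcc 0 B hB y : ℝ) ^ 2 + ‖f t‖ := by
        rw [truncRiccatiField, norm_neg]
        refine (norm_add_le _ _).trans_eq ?_
        rw [norm_pow, Real.norm_of_nonneg hy₀]
    _ ≤ B ^ 2 + M := by gcongr; exact hM t ht
    _ ≤ _ := Real.le_coe_toNNReal _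

theorem exists_truncRiccatiField_solution (hf : ContinuousOn f (Ici a)) (y₀ : ℝ) :
    ∃ h : ℝ → ℝ, h a = y₀ ∧
      ∀ t, a ≤ t → HasDerivWithinAt h (truncRiccatiField f hB t (h t)) (Ici a) t :=
  exists_hasDerivWithinAt_Ici_of_lipschitzWith_of_bdd
    (lipschitzWith_truncRiccatiField hB) (fun _ => (continuousOn_const.add hf).neg)
    (exists_bound_truncRiccatiField hB hf) y₀

end truncRiccatiField

section comparison

variable {f g g' h : ℝ → ℝ} {a B : ℝ} {hB : 0 ≤ B}

theorem truncRiccati_solution_le_bound (hf : ∀ t, a ≤ t → 0 ≤ f t)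
    (hh : ∀ t, a ≤ t → HasDerivWithinAt h (truncRiccatiField f hB t (h t)) (Ici a) t)
    (ha : h a ≤ B) {t : ℝ} (ht : a ≤ t) : h t ≤ B :=
  sub_nonpos.1 <| nonpos_of_deriv_nonpos_of_nonneg (fun s hs => (hh s hs).sub_const B)
    (sub_nonpos.2 ha) (fun s hs _ => neg_nonpos.2 (add_nonneg (sq_nonneg _) (hf s hs))) ht

theorem supersolution_le_truncRiccati_solution
    (hh : ∀ t, a ≤ t → HasDerivWithinAt h (truncRiccatiField f hB t (h t)) (Ici a) t)
    (hg : ∀ t, a ≤ t → HasDerivWithinAt g (g' t) (Ici a) t) (hg₀ : ∀ t, a ≤ t → 0 ≤ g t)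
    (hsuper : ∀ t, a ≤ t → g t ^ 2 + f t ≤ -g' t) (ha : g a ≤ h a) {t : ℝ} (ht : a ≤ t) :
    g t ≤ h t := by
  refine sub_nonpos.1 <| nonpos_of_deriv_nonpos_of_nonneg (fun s hs => (hg s hs).sub (hh s hs))
    (sub_nonpos.2 ha) (fun s hs hgh => ?_) ht
  have hp : (projIcc 0 B hB (h s) : ℝ) ≤ g s := by
    rw [coe_projIcc]
    exact max_le (hg₀ s hs) ((min_le_right _ _).trans (sub_nonneg.1 hgh))
  have := hsuper s hs
  have := pow_le_pow_left₀ (projIcc 0 B hB (h s)).2.1 hp 2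
  rw [truncRiccatiField]
  linarith

end comparison

theorem recInt_of_differential_inequality_general (t₀ : ℝ) (f : ℝ → ℝ)
    (hfc : ContinuousOn f (Set.Ici t₀)) (hf0 : ∀ x, t₀ ≤ x → 0 ≤ f x)
    (t₁ : ℝ) (ht₁ : t₀ ≤ t₁) (g g' : ℝ → ℝ)
    (hg : ∀ x, t₁ ≤ x → HasDerivWithinAt g (g' x) (Set.Ici t₁) x)
    (hg0 : ∀ x, t₁ ≤ x → 0 ≤ g x)
    (hineq : ∀ x, t₁ ≤ x → g x ^ 2 + f x ≤ -g' x) :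
    RecInt t₀ f := by
  have hB : 0 ≤ g t₁ := hg0 t₁ le_rfl
  obtain ⟨h, h₀, hh⟩ :=
    exists_truncRiccatiField_solution hB (hfc.mono (Ici_subset_Ici.2 ht₁)) (g t₁)
  have hgh : ∀ x, t₁ ≤ x → g x ≤ h x := fun x =>
    supersolution_le_truncRiccati_solution hh hg hg0 hineq h₀.ge
  have hhB : ∀ x, t₁ ≤ x → h x ≤ g t₁ := fun x =>
    truncRiccati_solution_le_bound (fun x hx => hf0 x (ht₁.trans hx)) hh h₀.le
  refine ⟨t₁, ht₁, h, fun x hx => (hg0 x hx).trans (hgh x hx), fun x hx => ?_⟩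
  rw [← truncRiccatiField_of_mem hB ⟨(hg0 x hx).trans (hgh x hx), hhB x hx⟩]
  exact hh x hx

/-- The differential inequality criterion: a nonnegative `C¹` solution of
`-g′(x) ≥ g(x)² + f(x)` on a tail interval implies recursive integrability of `f`. -/
theorem recInt_of_differential_inequality (t₀ : ℝ) (f : ℝ → ℝ)
    (hfc : ContinuousOn f (Set.Ici t₀)) (hf0 : ∀ x, t₀ ≤ x → 0 ≤ f x)
    (t₁ : ℝ) (ht₁ : t₀ ≤ t₁) (g g' : ℝ → ℝ)
    (hg : ∀ x, t₁ ≤ x → HasDerivWithinAt g (g' x) (Set.Ici t₁) x)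
    (hg'c : ContinuousOn g' (Set.Ici t₁))
    (hg0 : ∀ x, t₁ ≤ x → 0 ≤ g x)
    (hineq : ∀ x, t₁ ≤ x → g x ^ 2 + f x ≤ -g' x) :
    RecInt t₀ f :=
  recInt_of_differential_inequality_general t₀ f hfc hf0 t₁ ht₁ g g' hg hg0 hineq
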